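/- arXiv:2412.11446 — 2 statements merged into one kernel-verified Lean document; each statement's English description precedes it below -/
import Mathlib

section
/- Let X be a geometric random variable with parameter p ∈ (0,1] taking values in {1,2,...} with P(X = k) = p(1−p)^{k−1}. Then for any λ ≥ 0, P(X ≥ 1/p + λ) ≤ exp(−(1/4)·min(λ² p², λ p)). -/
open MeasureTheory Real

theorem stmt_5 {Ω : Type*} [MeasurableSpace Ω] (μ : Measure Ω) [IsProbabilityMeasure μ]
    (X : Ω → ℕ) (hX : ∀ ω, 1 ≤ X ω) (p : ℝ) (hp0 : 0 < p) (hp1 : p ≤ 1)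
    (hpmf : ∀ k : ℕ, 1 ≤ k → μ {ω | X ω = k} = ENNReal.ofReal (p * (1 - p) ^ (k - 1))) :
    ∀ lam : ℝ, 0 ≤ lam →
      μ {ω | 1 / p + lam ≤ (X ω : ℝ)} ≤
        ENNReal.ofReal (Real.exp (-(1/4) * min (lam ^ 2 * p ^ 2) (lam * p))) := by
  intro lam hlam
  set m : ℕ := ⌈1 / p + lam⌉₊ with hm
  have h1p : (1 : ℝ) ≤ 1 / p := (le_div_iff₀ hp0).mpr (by linarith)
  have hq0 : (0 : ℝ) ≤ 1 - p := by linarith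
  have hq1 : 1 - p < 1 := by linarith
  have hm1 : 1 ≤ m := by
    have : (1 : ℝ) ≤ 1 / p + lam := by linarith
    exact Nat.one_le_ceil_iff.mpr (by linarith)
  have hmle : (1 / p + lam : ℝ) ≤ m := Nat.le_ceil _
  have hsub : {ω | 1 / p + lam ≤ (X ω : ℝ)} ⊆ ⋃ k : ℕ, {ω | X ω = m + k} := by
    intro ω hω
    have h1 : m ≤ X ω := Nat.ceil_le.mpr hω
    exact Set.mem_iUnion.mpr ⟨X ω - m, by simp [Set.mem_setOf_eq]; omega⟩
  have hfun : ∀ k : ℕ, p * (1 - p) ^ (m + k - 1) = p * (1 - p) ^ (m - 1) * (1 - p) ^ k := by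
    intro k
    rw [show m + k - 1 = (m - 1) + k by omega, pow_add]; ring
  have hsumm : Summable (fun k : ℕ => p * (1 - p) ^ (m + k - 1)) := by
    simp only [hfun]
    exact (summable_geometric_of_lt_one hq0 hq1).mul_left _
  have hnn : ∀ k : ℕ, 0 ≤ p * (1 - p) ^ (m + k - 1) := fun k =>
    mul_nonneg hp0.le (pow_nonneg hq0 _)
  have htsum : (∑' k : ℕ, p * (1 - p) ^ (m + k - 1)) = (1 - p) ^ (m - 1) := by
    simp only [hfun]
    rw [tsum_mul_left, tsum_geometric_of_lt_one hq0 hq1]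
    rw [sub_sub_cancel]
    field_simp
  have key : μ {ω | 1 / p + lam ≤ (X ω : ℝ)} ≤ ENNReal.ofReal ((1 - p) ^ (m - 1)) := by
    calc μ {ω | 1 / p + lam ≤ (X ω : ℝ)} ≤ μ (⋃ k : ℕ, {ω | X ω = m + k}) :=
          measure_mono hsub
      _ ≤ ∑' k : ℕ, μ {ω | X ω = m + k} := measure_iUnion_le _
      _ = ∑' k : ℕ, ENNReal.ofReal (p * (1 - p) ^ (m + k - 1)) := by
          exact tsum_congr fun k => hpmf (m + k) (by omega)
      _ = ENNReal.ofReal (∑' k : ℕ, p * (1 - p) ^ (m + k - 1)) :=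
          (ENNReal.ofReal_tsum_of_nonneg hnn hsumm).symm
      _ = ENNReal.ofReal ((1 - p) ^ (m - 1)) := by rw [htsum]
  refine key.trans (ENNReal.ofReal_le_ofReal ?_)
  have h1 : (1 - p) ^ (m - 1) ≤ Real.exp (-p) ^ (m - 1) := by
    apply pow_le_pow_left₀ hq0
    have := Real.add_one_le_exp (-p)
    linarith
  have h2 : Real.exp (-p) ^ (m - 1) = Real.exp (((m - 1 : ℕ) : ℝ) * (-p)) := by
    rw [Real.exp_nat_mul]
  refine (h1.trans_eq h2).trans (Real.exp_le_exp.mpr ?_)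
  have hcast : ((m - 1 : ℕ) : ℝ) = (m : ℝ) - 1 := by
    have : (1 : ℕ) ≤ m := hm1
    push_cast [this]; ring
  rw [hcast]
  have hinv : p * (1 / p) = 1 := by field_simp
  have hmin : min (lam ^ 2 * p ^ 2) (lam * p) ≤ lam * p := min_le_right _ _
  have hmin0 : 0 ≤ min (lam ^ 2 * p ^ 2) (lam * p) := le_min (by positivity) (by positivity)
  nlinarith [mul_le_mul_of_nonneg_left hmle hp0.le]
end

section
/- Let m ≥ 3 be a real number and let ξ_i = 2·⌊m·(3/2)^i⌋ − ⌊m·(3/2)^{i+1}⌋ + 1 for integers i ≥ 0. Then for every q ≥ 0, the sum ∑_{i=0}^{q} 1/ξ_i ≤ 2/(m−2) · ∑_{i=0}^{∞} (2/3)^i = 6/(m−2). In particular, each ξ_i > 0. -/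
lemma xi_lb (m : ℝ) (hm : 3 ≤ m) (i : ℕ) :
    (m - 2) / 2 * (3/2 : ℝ) ^ i ≤
      ((2 * ⌊m * (3/2 : ℝ) ^ i⌋ - ⌊m * (3/2 : ℝ) ^ (i + 1)⌋ + 1 : ℤ) : ℝ) := by
  have hx : (1 : ℝ) ≤ (3/2 : ℝ) ^ i := one_le_pow₀ (by norm_num)
  have h1 : m * (3/2 : ℝ) ^ i - 1 < (⌊m * (3/2 : ℝ) ^ i⌋ : ℝ) := Int.sub_one_lt_floor _
  have h2 : (⌊m * (3/2 : ℝ) ^ (i + 1)⌋ : ℝ) ≤ m * (3/2 : ℝ) ^ (i + 1) := Int.floor_le _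
  push_cast
  have : m * (3/2 : ℝ) ^ (i + 1) = (3/2) * (m * (3/2 : ℝ) ^ i) := by ring
  nlinarith [h1, h2]

lemma xi_pos_real (m : ℝ) (hm : 3 ≤ m) (i : ℕ) :
    (0 : ℝ) < ((2 * ⌊m * (3/2 : ℝ) ^ i⌋ - ⌊m * (3/2 : ℝ) ^ (i + 1)⌋ + 1 : ℤ) : ℝ) := by
  have hx : (1 : ℝ) ≤ (3/2 : ℝ) ^ i := one_le_pow₀ (by norm_num)
  have := xi_lb m hm i
  nlinarith

theorem stmt_6 (m : ℝ) (hm : 3 ≤ m) :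
    (∀ i : ℕ, 0 < 2 * ⌊m * (3/2 : ℝ) ^ i⌋ - ⌊m * (3/2 : ℝ) ^ (i + 1)⌋ + 1) ∧
    ∀ q : ℕ,
      ∑ i ∈ Finset.range (q + 1),
        (1 : ℝ) / ((2 * ⌊m * (3/2 : ℝ) ^ i⌋ - ⌊m * (3/2 : ℝ) ^ (i + 1)⌋ + 1 : ℤ) : ℝ)
        ≤ 6 / (m - 2) := by
  have hm2 : (0 : ℝ) < m - 2 := by linarith
  constructor
  · intro i
    exact_mod_cast xi_pos_real m hm i
  · intro q
    have hterm : ∀ i ∈ Finset.range (q + 1),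
        (1 : ℝ) / ((2 * ⌊m * (3/2 : ℝ) ^ i⌋ - ⌊m * (3/2 : ℝ) ^ (i + 1)⌋ + 1 : ℤ) : ℝ)
          ≤ 2 / (m - 2) * (2/3 : ℝ) ^ i := by
      intro i _
      have hpos := xi_pos_real m hm i
      have hlb := xi_lb m hm i
      have hlbpos : (0 : ℝ) < (m - 2) / 2 * (3/2 : ℝ) ^ i := by positivity
      have := one_div_le_one_div_of_le hlbpos hlb
      calc (1 : ℝ) / _ ≤ 1 / ((m - 2) / 2 * (3/2 : ℝ) ^ i) := this
        _ = 2 / (m - 2) * (2/3 : ℝ) ^ i := by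
            rw [div_pow, div_pow]
            field_simp
    calc ∑ i ∈ Finset.range (q + 1),
          (1 : ℝ) / ((2 * ⌊m * (3/2 : ℝ) ^ i⌋ - ⌊m * (3/2 : ℝ) ^ (i + 1)⌋ + 1 : ℤ) : ℝ)
        ≤ ∑ i ∈ Finset.range (q + 1), 2 / (m - 2) * (2/3 : ℝ) ^ i :=
          Finset.sum_le_sum hterm
      _ = 2 / (m - 2) * ∑ i ∈ Finset.range (q + 1), (2/3 : ℝ) ^ i := by
          rw [Finset.mul_sum]
      _ ≤ 2 / (m - 2) * 3 := by
          apply mul_le_mul_of_nonneg_left _ (by positivity)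
          have h := geom_sum_eq (by norm_num : (2/3 : ℝ) ≠ 1) (q + 1)
          have h2 : ((2/3:ℝ) ^ (q + 1) - 1) / (2/3 - 1) = 3 * (1 - (2/3:ℝ) ^ (q+1)) := by ring
          have h3 : (0:ℝ) ≤ (2/3 : ℝ) ^ (q + 1) := by positivity
          rw [h, h2]
          linarith
      _ = 6 / (m - 2) := by field_simp; ring
end
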